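/- Let d ≥ 1, let W be a real d×d orthogonal matrix with columns w_1,…,w_d, and let Λ = diag(λ_1,…,λ_d) with all λ_i > 0. With Σ = W Λ Wᵀ, Δ = diag(Σ), R = Δ^{-1/2} Σ Δ^{-1/2}, Σ̇_i = (1/2) λ_i diag(W_{1i}²/Σ_{11},…,W_{di}²/Σ_{dd}), and D_i = −Δ^{1/2} (w_i w_iᵀ/λ_i) Δ^{1/2} + Σ̇_i R^{-1} + R^{-1} Σ̇_i, for any vectors x, y ∈ ℝ^d one has xᵀ D_i y = −x̃_i ỹ_i/λ_i + x̄_iᵀ Λ^{-1} ỹ + x̃ᵀ Λ^{-1} ȳ_i, where x̃ = Wᵀ Δ^{1/2} x with i-th component x̃_i, and x̄_i = Wᵀ Δ^{1/2} Σ̇_i x (similarly for y). In particular yᵀ D_i y = −ỹ_i²/λ_i + 2 ỹᵀ Λ^{-1} ȳ_i. -/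

import Mathlib

open Matrix

/-- `Σ = W Λ Wᵀ` for a diagonal `Λ` with entries `lam`. -/
noncomputable def Sig {d : ℕ} (W : Matrix (Fin d) (Fin d) ℝ) (lam : Fin d → ℝ) :
    Matrix (Fin d) (Fin d) ℝ :=
  W * Matrix.diagonal lam * Wᵀ

/-- `Δ^{1/2}`: the diagonal matrix with entries `√(Σ_{jj})`. -/
noncomputable def Dhalf {d : ℕ} (W : Matrix (Fin d) (Fin d) ℝ) (lam : Fin d → ℝ) :
    Matrix (Fin d) (Fin d) ℝ :=
  Matrix.diagonal fun j => Real.sqrt (Sig W lam j j)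

/-- `R = Δ^{-1/2} Σ Δ^{-1/2}` with `Δ = diag(Σ)`. -/
noncomputable def Rmat {d : ℕ} (W : Matrix (Fin d) (Fin d) ℝ) (lam : Fin d → ℝ) :
    Matrix (Fin d) (Fin d) ℝ :=
  Matrix.diagonal (fun j => (Real.sqrt (Sig W lam j j))⁻¹) * Sig W lam *
    Matrix.diagonal (fun j => (Real.sqrt (Sig W lam j j))⁻¹)

/-- `Σ̇_i = (1/2) λ_i diag(W_{1i}²/Σ_{11}, …, W_{di}²/Σ_{dd})`. -/
noncomputable def Sdot {d : ℕ} (W : Matrix (Fin d) (Fin d) ℝ) (lam : Fin d → ℝ) (i : Fin d) :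
    Matrix (Fin d) (Fin d) ℝ :=
  Matrix.diagonal fun j => (1 / 2) * lam i * (W j i) ^ 2 / Sig W lam j j

/-- The closed-form expression `D_i = −Δ^{1/2} (w_i w_iᵀ/λ_i) Δ^{1/2} + Σ̇_i R⁻¹ + R⁻¹ Σ̇_i`. -/
noncomputable def Dform {d : ℕ} (W : Matrix (Fin d) (Fin d) ℝ) (lam : Fin d → ℝ) (i : Fin d) :
    Matrix (Fin d) (Fin d) ℝ :=
  -(Dhalf W lam * ((lam i)⁻¹ • Matrix.vecMulVec (fun j => W j i) (fun j => W j i)) *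
      Dhalf W lam) +
    Sdot W lam i * (Rmat W lam)⁻¹ + (Rmat W lam)⁻¹ * Sdot W lam i

/-- The rescaled-and-rotated vector `x̃ = Wᵀ Δ^{1/2} x`. -/
noncomputable def tilde {d : ℕ} (W : Matrix (Fin d) (Fin d) ℝ) (lam : Fin d → ℝ)
    (x : Fin d → ℝ) : Fin d → ℝ :=
  (Wᵀ * Dhalf W lam) *ᵥ x

/-- The vector `x̄_i = Wᵀ Δ^{1/2} Σ̇_i x`. -/
noncomputable def barv {d : ℕ} (W : Matrix (Fin d) (Fin d) ℝ) (lam : Fin d → ℝ) (i : Fin d)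
    (x : Fin d → ℝ) : Fin d → ℝ :=
  (Wᵀ * Dhalf W lam * Sdot W lam i) *ᵥ x

lemma aux_dp {d : ℕ} (A : Matrix (Fin d) (Fin d) ℝ) (x z : Fin d → ℝ) :
    (A *ᵥ x) ⬝ᵥ z = x ⬝ᵥ (Aᵀ *ᵥ z) := by
  rw [Matrix.dotProduct_mulVec, Matrix.vecMul_transpose, dotProduct_comm]

lemma Sig_pos {d : ℕ} {W : Matrix (Fin d) (Fin d) ℝ} (hW : Wᵀ * W = 1)
    {lam : Fin d → ℝ} (hlam : ∀ i, 0 < lam i) (j : Fin d) : 0 < Sig W lam j j := by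
  have hWWt : W * Wᵀ = 1 := mul_eq_one_comm.mp hW
  have hrow : ∑ k, W j k * W j k = 1 := by
    have := congrFun (congrFun hWWt j) j
    simpa [Matrix.mul_apply, Matrix.one_apply] using this
  have hSig : Sig W lam j j = ∑ k, lam k * (W j k * W j k) := by
    simp only [Sig, Matrix.mul_apply, Matrix.diagonal_apply, Matrix.transpose_apply,
      Finset.sum_mul]
    rw [Finset.sum_comm]
    refine Finset.sum_congr rfl fun k _ => ?_
    simp [Finset.sum_ite_eq', Finset.mem_univ]
    ring
  rw [hSig]
  have hne : ∃ k, W j k ≠ 0 := by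
    by_contra h
    push_neg at h
    simp [h] at hrow
  obtain ⟨k, hk⟩ := hne
  refine Finset.sum_pos' (fun m _ => mul_nonneg (hlam m).le (mul_self_nonneg _))
    ⟨k, Finset.mem_univ k, mul_pos (hlam k) (mul_self_pos.mpr hk)⟩

lemma Rinv_eq {d : ℕ} {W : Matrix (Fin d) (Fin d) ℝ} (hW : Wᵀ * W = 1)
    {lam : Fin d → ℝ} (hlam : ∀ i, 0 < lam i) :
    (Rmat W lam)⁻¹ =
      Dhalf W lam * (W * Matrix.diagonal (fun k => (lam k)⁻¹) * Wᵀ) * Dhalf W lam := by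
  have hWWt : W * Wᵀ = 1 := mul_eq_one_comm.mp hW
  have hs : ∀ j, Real.sqrt (Sig W lam j j) ≠ 0 := fun j =>
    (Real.sqrt_pos.mpr (Sig_pos hW hlam j)).ne'
  set Dinv : Matrix (Fin d) (Fin d) ℝ :=
    Matrix.diagonal (fun j => (Real.sqrt (Sig W lam j j))⁻¹) with hDinv
  set P : Matrix (Fin d) (Fin d) ℝ := W * Matrix.diagonal (fun k => (lam k)⁻¹) * Wᵀ with hP
  have h1 : Dinv * Dhalf W lam = 1 := by
    rw [hDinv, Dhalf, Matrix.diagonal_mul_diagonal]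
    have e : (fun j => (Real.sqrt (Sig W lam j j))⁻¹ * Real.sqrt (Sig W lam j j))
        = fun _ => (1:ℝ) := by
      funext j; exact inv_mul_cancel₀ (hs j)
    rw [e, Matrix.diagonal_one]
  have h2 : Sig W lam * P = 1 := by
    rw [Sig, hP]
    have e : W * Matrix.diagonal lam * Wᵀ * (W * Matrix.diagonal (fun k => (lam k)⁻¹) * Wᵀ)
        = W * (Matrix.diagonal lam * (Wᵀ * W) * Matrix.diagonal (fun k => (lam k)⁻¹)) * Wᵀ := by
      noncomm_ring
    rw [e, hW, mul_one, Matrix.diagonal_mul_diagonal]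
    have hl : (fun k => lam k * (lam k)⁻¹) = fun _ => (1:ℝ) := by
      ext k; exact mul_inv_cancel₀ (hlam k).ne'
    rw [hl, Matrix.diagonal_one, mul_one, hWWt]
  apply Matrix.inv_eq_right_inv
  have h1' : ∀ Z : Matrix (Fin d) (Fin d) ℝ, Dinv * (Dhalf W lam * Z) = Z := by
    intro Z; rw [← mul_assoc, h1, one_mul]
  calc Rmat W lam * (Dhalf W lam * P * Dhalf W lam)
      = Dinv * (Sig W lam * (Dinv * (Dhalf W lam * (P * Dhalf W lam)))) := by
        rw [Rmat]; simp only [Matrix.mul_assoc]; rfl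
    _ = Dinv * (Sig W lam * (P * Dhalf W lam)) := by rw [h1']
    _ = 1 := by
        rw [← Matrix.mul_assoc (Sig W lam) P (Dhalf W lam), h2, one_mul, h1]

lemma quadform_aux {d : ℕ}
    (W : Matrix (Fin d) (Fin d) ℝ) (hW : Wᵀ * W = 1)
    (lam : Fin d → ℝ) (hlam : ∀ i, 0 < lam i)
    (i : Fin d) (x y : Fin d → ℝ) :
    x ⬝ᵥ (Dform W lam i *ᵥ y) =
        -(tilde W lam x i * tilde W lam y i / lam i)
          + barv W lam i x ⬝ᵥ ((Matrix.diagonal lam)⁻¹ *ᵥ tilde W lam y)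
          + tilde W lam x ⬝ᵥ ((Matrix.diagonal lam)⁻¹ *ᵥ barv W lam i y) := by
  have hdiaginv : (Matrix.diagonal lam)⁻¹ = Matrix.diagonal (fun k => (lam k)⁻¹) := by
    apply Matrix.inv_eq_right_inv
    rw [Matrix.diagonal_mul_diagonal]
    have e : (fun k => lam k * (lam k)⁻¹) = fun _ => (1:ℝ) := by
      funext k; exact mul_inv_cancel₀ (hlam k).ne'
    rw [e, Matrix.diagonal_one]
  set u : Fin d → ℝ := fun j => W j i with hu
  set Dh := Dhalf W lam with hDh
  have hDhT : Dhᵀ = Dh := by rw [hDh, Dhalf, Matrix.diagonal_transpose]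
  have hSdT : (Sdot W lam i)ᵀ = Sdot W lam i := by rw [Sdot, Matrix.diagonal_transpose]
  have hdiagT : (Matrix.diagonal (fun k => (lam k)⁻¹))ᵀ = Matrix.diagonal (fun k => (lam k)⁻¹) :=
    Matrix.diagonal_transpose _
  -- tilde as dot-product with u
  have htilde : ∀ z : Fin d → ℝ, tilde W lam z i = u ⬝ᵥ (Dh *ᵥ z) := by
    intro z
    simp only [tilde, ← Matrix.mulVec_mulVec, ← hDh]
    simp [Matrix.mulVec, dotProduct, Matrix.transpose_apply, hu]
  -- term 1
  have hvv : ∀ z : Fin d → ℝ, Matrix.vecMulVec u u *ᵥ z = (u ⬝ᵥ z) • u := by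
    intro z
    ext j
    simp only [Matrix.mulVec, Matrix.vecMulVec_apply, dotProduct, Pi.smul_apply, smul_eq_mul]
    rw [Finset.sum_mul]
    exact Finset.sum_congr rfl fun k _ => by ring
  have hT1 : x ⬝ᵥ ((Dh * ((lam i)⁻¹ • Matrix.vecMulVec u u) * Dh) *ᵥ y)
      = tilde W lam x i * tilde W lam y i / lam i := by
    rw [← Matrix.mulVec_mulVec, ← Matrix.mulVec_mulVec, Matrix.smul_mulVec, hvv,
      htilde, htilde]
    rw [smul_smul, Matrix.mulVec_smul, dotProduct_smul]
    rw [show x ⬝ᵥ (Dh *ᵥ u) = u ⬝ᵥ (Dh *ᵥ x) by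
      rw [dotProduct_comm, aux_dp, hDhT]]
    simp [div_eq_mul_inv]
    ring
  -- term 2
  have hT2 : x ⬝ᵥ ((Sdot W lam i * (Rmat W lam)⁻¹) *ᵥ y)
      = barv W lam i x ⬝ᵥ ((Matrix.diagonal lam)⁻¹ *ᵥ tilde W lam y) := by
    rw [hdiaginv, barv, tilde, aux_dp, Matrix.mulVec_mulVec, Matrix.mulVec_mulVec]
    congr 1
    rw [Rinv_eq hW hlam, Matrix.transpose_mul, Matrix.transpose_mul,
      Matrix.transpose_transpose, hSdT, ← hDh, hDhT]
    noncomm_ring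
  -- term 3
  have hT3 : x ⬝ᵥ (((Rmat W lam)⁻¹ * Sdot W lam i) *ᵥ y)
      = tilde W lam x ⬝ᵥ ((Matrix.diagonal lam)⁻¹ *ᵥ barv W lam i y) := by
    rw [hdiaginv, barv, tilde, aux_dp, Matrix.mulVec_mulVec, Matrix.mulVec_mulVec]
    congr 1
    rw [Rinv_eq hW hlam, Matrix.transpose_mul, Matrix.transpose_transpose, ← hDh, hDhT]
    noncomm_ring
  rw [Dform, Matrix.add_mulVec, Matrix.add_mulVec, Matrix.neg_mulVec,
    dotProduct_add, dotProduct_add, dotProduct_neg, ← hDh, ← hu, hT1, hT2, hT3]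

/-- for the derivative expression `D_i` of `∂R⁻¹/∂ log λ_i`,
`xᵀ D_i y = −x̃_i ỹ_i/λ_i + x̄_iᵀ Λ⁻¹ ỹ + x̃ᵀ Λ⁻¹ ȳ_i`, and in particular
`yᵀ D_i y = −ỹ_i²/λ_i + 2 ỹᵀ Λ⁻¹ ȳ_i`. -/
theorem quadform_Dform {d : ℕ} (hd : 1 ≤ d)
    (W : Matrix (Fin d) (Fin d) ℝ) (hW : Wᵀ * W = 1)
    (lam : Fin d → ℝ) (hlam : ∀ i, 0 < lam i)
    (i : Fin d) (x y : Fin d → ℝ) :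
    x ⬝ᵥ (Dform W lam i *ᵥ y) =
        -(tilde W lam x i * tilde W lam y i / lam i)
          + barv W lam i x ⬝ᵥ ((Matrix.diagonal lam)⁻¹ *ᵥ tilde W lam y)
          + tilde W lam x ⬝ᵥ ((Matrix.diagonal lam)⁻¹ *ᵥ barv W lam i y) ∧
    y ⬝ᵥ (Dform W lam i *ᵥ y) =
        -((tilde W lam y i) ^ 2 / lam i)
          + 2 * (tilde W lam y ⬝ᵥ ((Matrix.diagonal lam)⁻¹ *ᵥ barv W lam i y)) := by
  refine ⟨quadform_aux W hW lam hlam i x y, ?_⟩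
  have hdiaginv : (Matrix.diagonal lam)⁻¹ = Matrix.diagonal (fun k => (lam k)⁻¹) := by
    apply Matrix.inv_eq_right_inv
    rw [Matrix.diagonal_mul_diagonal]
    have e : (fun k => lam k * (lam k)⁻¹) = fun _ => (1:ℝ) := by
      funext k; exact mul_inv_cancel₀ (hlam k).ne'
    rw [e, Matrix.diagonal_one]
  have hsymm : barv W lam i y ⬝ᵥ ((Matrix.diagonal lam)⁻¹ *ᵥ tilde W lam y)
      = tilde W lam y ⬝ᵥ ((Matrix.diagonal lam)⁻¹ *ᵥ barv W lam i y) := by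
    rw [hdiaginv]
    simp only [dotProduct, Matrix.mulVec_diagonal]
    exact Finset.sum_congr rfl fun k _ => by ring
  rw [quadform_aux W hW lam hlam i y y, hsymm]
  ring
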